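/- arXiv:math/0701641 — 2 statements merged into one kernel-verified Lean document; each statement's English description precedes it below -/
import Mathlib

section
/- (Artin's trick.) Let A be a symmetric n×n integer matrix whose off-diagonal entries are all nonnegative. Let v⁽¹⁾, v⁽²⁾ ∈ ℤⁿ and define v⁽⁰⁾ componentwise by v⁽⁰⁾_p = min(v⁽¹⁾_p, v⁽²⁾_p). Then for every index p, choosing j ∈ {1,2} with v⁽⁰⁾_p = v⁽ʲ⁾_p, one has (−A v⁽⁰⁾)_p ≥ (−A v⁽ʲ⁾)_p. In particular, if S is a set of indices such that (−A v⁽¹⁾)_p ≥ 0 and (−A v⁽²⁾)_p ≥ 0 for all p ∈ S, then (−A v⁽⁰⁾)_p ≥ 0 for all p ∈ S. -/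
theorem stmt_2 {n : ℕ} (A : Matrix (Fin n) (Fin n) ℤ)
    (hsymm : A.IsSymm) (hoff : ∀ p q, p ≠ q → 0 ≤ A p q)
    (v1 v2 : Fin n → ℤ) (v0 : Fin n → ℤ) (hv0 : ∀ p, v0 p = min (v1 p) (v2 p)) :
    (∀ p, ∀ w ∈ ({v1, v2} : Set (Fin n → ℤ)), v0 p = w p →
        (-(A.mulVec w)) p ≤ (-(A.mulVec v0)) p) ∧
    (∀ S : Set (Fin n), (∀ p ∈ S, 0 ≤ (-(A.mulVec v1)) p) →
        (∀ p ∈ S, 0 ≤ (-(A.mulVec v2)) p) →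
        ∀ p ∈ S, 0 ≤ (-(A.mulVec v0)) p) := by
  have key : ∀ p, ∀ w ∈ ({v1, v2} : Set (Fin n → ℤ)), v0 p = w p →
      (-(A.mulVec w)) p ≤ (-(A.mulVec v0)) p := by
    intro p w hw hpw
    have hle : ∀ q, v0 q ≤ w q := by
      intro q
      rcases hw with rfl | rfl
      · rw [hv0]; exact min_le_left _ _
      · rw [hv0]; exact min_le_right _ _
    simp only [Pi.neg_apply, neg_le_neg_iff, Matrix.mulVec, dotProduct]
    apply Finset.sum_le_sum
    intro q _
    rcases eq_or_ne p q with rfl | hne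
    · rw [← hpw]
    · exact mul_le_mul_of_nonneg_left (hle q) (hoff p q hne)
  refine ⟨key, ?_⟩
  intro S h1 h2 p hp
  rcases le_total (v1 p) (v2 p) with h | h
  · have : v0 p = v1 p := by rw [hv0]; exact min_eq_left h
    exact le_trans (h1 p hp) (key p v1 (Or.inl rfl) this)
  · have : v0 p = v2 p := by rw [hv0]; exact min_eq_right h
    exact le_trans (h2 p hp) (key p v2 (Or.inr rfl) this)
end

section
/- Let A be a symmetric n×n integer matrix with nonnegative off-diagonal entries, let v ∈ ℤⁿ, and let S ⊆ {1,…,n} be a subset of indices. Consider the set W of all w ∈ ℤⁿ such that (i) w_p ≥ v_p for all p, (ii) w_p = v_p for all p ∈ S, and (iii) (−A w)_p ≥ 0 for all p ∉ S. If W is nonempty, then W is closed under componentwise minimum, and consequently W has a unique element that is minimal with respect to the componentwise partial order (namely the componentwise infimum of W). -/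
theorem stmt_3 {n : ℕ} (A : Matrix (Fin n) (Fin n) ℤ)
    (hsymm : A.IsSymm) (hoff : ∀ p q, p ≠ q → 0 ≤ A p q)
    (v : Fin n → ℤ) (S : Set (Fin n))
    (W : Set (Fin n → ℤ))
    (hW : W = {w | (∀ p, v p ≤ w p) ∧ (∀ p ∈ S, w p = v p) ∧
        (∀ p, p ∉ S → 0 ≤ (-(A.mulVec w)) p)})
    (hne : W.Nonempty) :
    (∀ w1 ∈ W, ∀ w2 ∈ W, (fun p => min (w1 p) (w2 p)) ∈ W) ∧
    (∃! m, m ∈ W ∧ ∀ w ∈ W, ∀ p, m p ≤ w p) := by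
  subst hW
  have hclosed : ∀ w1 ∈ {w | (∀ p, v p ≤ w p) ∧ (∀ p ∈ S, w p = v p) ∧
        (∀ p, p ∉ S → 0 ≤ (-(A.mulVec w)) p)}, ∀ w2 ∈ {w | (∀ p, v p ≤ w p) ∧ (∀ p ∈ S, w p = v p) ∧
        (∀ p, p ∉ S → 0 ≤ (-(A.mulVec w)) p)}, (fun p => min (w1 p) (w2 p)) ∈ {w | (∀ p, v p ≤ w p) ∧ (∀ p ∈ S, w p = v p) ∧
        (∀ p, p ∉ S → 0 ≤ (-(A.mulVec w)) p)} := by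
    rintro w1 ⟨h11, h12, h13⟩ w2 ⟨h21, h22, h23⟩
    refine ⟨fun p => le_min (h11 p) (h21 p), fun p hp => by simp [h12 p hp, h22 p hp], ?_⟩
    intro p hp
    have key : ∀ w : Fin n → ℤ, min (w1 p) (w2 p) = w p →
        (∀ q, min (w1 q) (w2 q) ≤ w q) →
        Matrix.mulVec A w p ≤ 0 →
        0 ≤ (-(Matrix.mulVec A (fun q => min (w1 q) (w2 q)))) p := by
      intro w heq hle hw
      have hsum : ∑ q, A p q * min (w1 q) (w2 q) ≤ ∑ q, A p q * w q := by
        apply Finset.sum_le_sum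
        intro q _
        by_cases hq : q = p
        · subst hq; rw [heq]
        · exact mul_le_mul_of_nonneg_left (hle q) (hoff p q (Ne.symm hq))
      simp only [Pi.neg_apply, neg_nonneg, Matrix.mulVec, dotProduct] at *
      exact le_trans hsum hw
    rcases le_total (w1 p) (w2 p) with h | h
    · exact key w1 (min_eq_left h) (fun q => min_le_left _ _)
        (by have := h13 p hp; simpa [neg_nonneg] using this)
    · exact key w2 (min_eq_right h) (fun q => min_le_right _ _)
        (by have := h23 p hp; simpa [neg_nonneg] using this)
  refine ⟨hclosed, ?_⟩
  -- choose, for each coordinate p, a witness minimizing that coordinate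
  have hwit : ∀ p : Fin n, ∃ w, w ∈ {w | (∀ p, v p ≤ w p) ∧ (∀ p ∈ S, w p = v p) ∧
        (∀ p, p ∉ S → 0 ≤ (-(A.mulVec w)) p)} ∧ ∀ w', w' ∈ {w | (∀ p, v p ≤ w p) ∧ (∀ p ∈ S, w p = v p) ∧
        (∀ p, p ∉ S → 0 ≤ (-(A.mulVec w)) p)} → w p ≤ w' p := by
    intro p
    obtain ⟨lb, ⟨w, hwW, hwp⟩, hlb⟩ := Int.exists_least_of_bdd
      (P := fun z => ∃ w, w ∈ {w | (∀ p, v p ≤ w p) ∧ (∀ p ∈ S, w p = v p) ∧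
        (∀ p, p ∉ S → 0 ≤ (-(A.mulVec w)) p)} ∧ w p = z)
      ⟨v p, by rintro z ⟨w, hwW, rfl⟩; exact hwW.1 p⟩
      ⟨hne.choose p, hne.choose, hne.choose_spec, rfl⟩
    exact ⟨w, hwW, fun w' hw' => hwp ▸ hlb (w' p) ⟨w', hw', rfl⟩⟩
  choose wp hwpW hwpmin using hwit
  obtain ⟨w0, hw0⟩ := hne
  set m : Fin n → ℤ := fun q => Finset.univ.fold min (w0 q) (fun p => wp p q) with hm
  have hmem : ∀ s : Finset (Fin n),
      (fun q => s.fold min (w0 q) (fun p => wp p q)) ∈ {w | (∀ p, v p ≤ w p) ∧ (∀ p ∈ S, w p = v p) ∧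
        (∀ p, p ∉ S → 0 ≤ (-(A.mulVec w)) p)} := by
    intro s
    induction s using Finset.induction with
    | empty => simpa using hw0
    | @insert a s ha ih =>
      have : (fun q => (insert a s).fold min (w0 q) (fun p => wp p q)) =
          (fun q => min (wp a q) (s.fold min (w0 q) (fun p => wp p q))) := by
        funext q
        rw [Finset.fold_insert ha]
      rw [this]
      exact hclosed _ (hwpW a) _ ih
  have hmW : m ∈ {w | (∀ p, v p ≤ w p) ∧ (∀ p ∈ S, w p = v p) ∧
        (∀ p, p ∉ S → 0 ≤ (-(A.mulVec w)) p)} := hmem Finset.univ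
  have hmmin : ∀ w ∈ {w | (∀ p, v p ≤ w p) ∧ (∀ p ∈ S, w p = v p) ∧
        (∀ p, p ∉ S → 0 ≤ (-(A.mulVec w)) p)}, ∀ p, m p ≤ w p := by
    intro w hw p
    have : m p ≤ wp p p := by
      apply (Finset.fold_min_le _).mpr
      exact Or.inr ⟨p, Finset.mem_univ p, le_refl _⟩
    exact le_trans this (hwpmin p w hw)
  exact ⟨m, ⟨hmW, hmmin⟩, fun y ⟨hyW, hymin⟩ =>
    funext fun p => le_antisymm (hymin m hmW p) (hmmin y hyW p)⟩
end
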